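/- arXiv:1612.01861 — 2 statements merged into one kernel-verified Lean document; each statement's English description precedes it below -/
import Mathlib

section
/- Let b > 1 and u ∈ (0,1), and let v : ℝ → ℝ be the unique antiderivative with v(0)=0 of θ ↦ -( u/d₀(θ) + (1-u)/d₁(θ) ). Then v(θ + π) = v(θ) + π for every θ ∈ ℝ. -/
open MeasureTheory Filter Real

/-- `d₀(θ) = -b·sin²θ - (1/b)·cos²θ`. -/
noncomputable def d0 (b θ : ℝ) : ℝ := -b * Real.sin θ ^ 2 - (1 / b) * Real.cos θ ^ 2

/-- `d₁(θ) = -(1/b)·sin²θ - b·cos²θ`. -/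
noncomputable def d1 (b θ : ℝ) : ℝ := -(1 / b) * Real.sin θ ^ 2 - b * Real.cos θ ^ 2

/-- `v` is the antiderivative vanishing at `0` of `θ ↦ -(u/d₀(θ) + (1-u)/d₁(θ))`. -/
noncomputable def v (b u θ : ℝ) : ℝ :=
  ∫ α in (0:ℝ)..θ, -(u / d0 b α + (1 - u) / d1 b α)

noncomputable def G (c θ : ℝ) : ℝ :=
  θ + Real.arctan ((c - 1) * Real.sin θ * Real.cos θ / (Real.cos θ ^ 2 + c * Real.sin θ ^ 2))

lemma Dpos (c : ℝ) (hc : 0 < c) (θ : ℝ) : 0 < Real.cos θ ^ 2 + c * Real.sin θ ^ 2 := by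
  have hs := Real.sin_sq_add_cos_sq θ
  rcases le_total c 1 with h | h
  · nlinarith [mul_nonneg (sub_nonneg.2 h) (sq_nonneg (Real.cos θ))]
  · nlinarith [mul_nonneg (sub_nonneg.2 h) (sq_nonneg (Real.sin θ))]

lemma G_deriv (c : ℝ) (hc : 0 < c) (θ : ℝ) :
    HasDerivAt (G c) (c / (Real.cos θ ^ 2 + c ^ 2 * Real.sin θ ^ 2)) θ := by
  have hD := Dpos c hc θ
  have hD2 := Dpos (c ^ 2) (by positivity) θ
  have hN : HasDerivAt (fun θ => (c - 1) * Real.sin θ * Real.cos θ)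
      ((c - 1) * (Real.cos θ ^ 2 - Real.sin θ ^ 2)) θ := by
    have := (((Real.hasDerivAt_sin θ).const_mul (c - 1)).mul (Real.hasDerivAt_cos θ))
    refine this.congr_deriv (Eq.symm ?_)
    ring
  have hDen : HasDerivAt (fun θ => Real.cos θ ^ 2 + c * Real.sin θ ^ 2)
      (2 * (c - 1) * Real.sin θ * Real.cos θ) θ := by
    have h1 := (Real.hasDerivAt_cos θ).pow 2
    have h2 := ((Real.hasDerivAt_sin θ).pow 2).const_mul c
    refine (h1.add h2).congr_deriv (Eq.symm ?_)
    ring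
  have hq := hN.div hDen hD.ne'
  have ha := hq.arctan
  have h := (hasDerivAt_id θ).add ha
  have hs := Real.sin_sq_add_cos_sq θ
  refine h.congr_deriv (Eq.symm ?_)
  have hden2 : (0:ℝ) < 1 + ((c - 1) * Real.sin θ * Real.cos θ / (Real.cos θ ^ 2 + c * Real.sin θ ^ 2)) ^ 2 := by positivity
  simp only [Pi.div_apply]
  field_simp
  linear_combination (-c *
    (Real.cos θ ^ 2 + c ^ 2 * Real.sin θ ^ 2) *
    (Real.sin θ ^ 2 + Real.cos θ ^ 2)) * hs


/-- `v(θ + π) = v(θ) + π` for every `θ`. -/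
theorem v_add_pi (b u : ℝ) (hb : 1 < b) (hu : u ∈ Set.Ioo (0:ℝ) 1) :
    ∀ θ : ℝ, v b u (θ + π) = v b u θ + π := by
  have hb0 : 0 < b := lt_trans one_pos hb
  have hb0' : 0 < b⁻¹ := inv_pos.2 hb0
  have hb1 : 1 / b < 1 := by rw [div_lt_one hb0]; exact hb
  have hb1' : 0 < 1 / b := by positivity
  have hd0neg : ∀ α, d0 b α < 0 := by
    intro α
    have hs := Real.sin_sq_add_cos_sq α
    unfold d0
    nlinarith [mul_nonneg hb1'.le (sq_nonneg (Real.cos α)),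
      mul_nonneg (by linarith : (0:ℝ) ≤ b - 1 / b) (sq_nonneg (Real.sin α))]
  have hd1neg : ∀ α, d1 b α < 0 := by
    intro α
    have hs := Real.sin_sq_add_cos_sq α
    unfold d1
    nlinarith [mul_nonneg hb1'.le (sq_nonneg (Real.sin α)),
      mul_nonneg (by linarith : (0:ℝ) ≤ b - 1 / b) (sq_nonneg (Real.cos α))]
  set F : ℝ → ℝ := fun θ => u * G b θ + (1 - u) * G b⁻¹ θ with hF
  have hderiv : ∀ α : ℝ, HasDerivAt F (-(u / d0 b α + (1 - u) / d1 b α)) α := by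
    intro α
    have h1 := (G_deriv b hb0 α).const_mul u
    have h2 := (G_deriv b⁻¹ hb0' α).const_mul (1 - u)
    have h := h1.add h2
    refine h.congr_deriv (Eq.symm ?_)
    have e1 : (0:ℝ) < Real.cos α ^ 2 + b ^ 2 * Real.sin α ^ 2 := Dpos (b ^ 2) (by positivity) α
    have e2 : (0:ℝ) < Real.cos α ^ 2 + (b⁻¹) ^ 2 * Real.sin α ^ 2 := Dpos ((b⁻¹) ^ 2) (by positivity) α
    have hd0eq : d0 b α = -((Real.cos α ^ 2 + b ^ 2 * Real.sin α ^ 2) / b) := by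
      unfold d0; field_simp; ring
    have hd1eq : d1 b α = -((Real.cos α ^ 2 + (b⁻¹) ^ 2 * Real.sin α ^ 2) * b) := by
      unfold d1; field_simp; ring
    have i0 : (d0 b α)⁻¹ = -(b / (Real.cos α ^ 2 + b ^ 2 * Real.sin α ^ 2)) := by
      rw [hd0eq, inv_neg, inv_div]
    have i1 : (d1 b α)⁻¹ = -(b⁻¹ / (Real.cos α ^ 2 + (b⁻¹) ^ 2 * Real.sin α ^ 2)) := by
      rw [hd1eq, inv_neg, mul_inv]; ring
    rw [div_eq_mul_inv u, div_eq_mul_inv (1 - u), i0, i1]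
    ring
  have hcd0 : Continuous (d0 b) := by unfold d0; continuity
  have hcd1 : Continuous (d1 b) := by unfold d1; continuity
  have hcont : Continuous fun α => -(u / d0 b α + (1 - u) / d1 b α) :=
    ((continuous_const.div hcd0 fun x => (hd0neg x).ne).add
      (continuous_const.div hcd1 fun x => (hd1neg x).ne)).neg
  have key : ∀ θ : ℝ, v b u θ = F θ - F 0 := fun θ =>
    intervalIntegral.integral_eq_sub_of_hasDerivAt (fun x _ => hderiv x)
      (hcont.intervalIntegrable _ _)
  have hG : ∀ c θ : ℝ, G c (θ + π) = G c θ + π := by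
    intro c θ
    unfold G
    rw [Real.sin_add_pi, Real.cos_add_pi]
    have : (c - 1) * -Real.sin θ * -Real.cos θ / ((-Real.cos θ) ^ 2 + c * (-Real.sin θ) ^ 2)
        = (c - 1) * Real.sin θ * Real.cos θ / (Real.cos θ ^ 2 + c * Real.sin θ ^ 2) := by
      ring_nf
    rw [this]
    ring
  intro θ
  rw [key, key]
  simp only [hF]
  rw [hG b, hG b⁻¹]
  ring
end

section
/- Let f_b(θ) = (b - 1/b)·sin(2θ)·( 1/d₀(θ) + 1/d₁(θ) ) for b > 1. Then ∫₀^{π/2} f_b(θ) dθ → -∞ as b → +∞. -/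
open MeasureTheory Filter Real

lemma d0_neg {b : ℝ} (hb : 1 < b) (θ : ℝ) : d0 b θ < 0 := by
  have hb0 : (0:ℝ) < b := by linarith
  have hib : (0:ℝ) < 1 / b := by positivity
  have hib2 : 1 / b ≤ b := by
    rw [div_le_iff₀ hb0]; nlinarith
  have hs := Real.sin_sq_add_cos_sq θ
  have h1 : 0 ≤ Real.sin θ ^ 2 := sq_nonneg _
  have h2 : 0 ≤ Real.cos θ ^ 2 := sq_nonneg _
  unfold d0
  nlinarith

lemma d1_neg {b : ℝ} (hb : 1 < b) (θ : ℝ) : d1 b θ < 0 := by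
  have hb0 : (0:ℝ) < b := by linarith
  have hib : (0:ℝ) < 1 / b := by positivity
  have hib2 : 1 / b ≤ b := by
    rw [div_le_iff₀ hb0]; nlinarith
  have hs := Real.sin_sq_add_cos_sq θ
  have h1 : 0 ≤ Real.sin θ ^ 2 := sq_nonneg _
  have h2 : 0 ≤ Real.cos θ ^ 2 := sq_nonneg _
  unfold d1
  nlinarith

lemma hasDerivAt_d0 (b θ : ℝ) :
    HasDerivAt (d0 b) (-(b - 1 / b) * Real.sin (2 * θ)) θ := by
  have h1 : HasDerivAt (fun x => Real.sin x ^ 2) (2 * Real.sin θ * Real.cos θ) θ := by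
    simpa [mul_comm, mul_assoc] using (Real.hasDerivAt_sin θ).fun_pow 2
  have h2 : HasDerivAt (fun x => Real.cos x ^ 2) (2 * Real.cos θ * (-Real.sin θ)) θ := by
    simpa [mul_comm, mul_assoc] using (Real.hasDerivAt_cos θ).fun_pow 2
  have := ((h1.const_mul (-b)).fun_sub (h2.const_mul (1 / b)))
  exact this.congr_deriv (by rw [Real.sin_two_mul]; ring)

lemma hasDerivAt_d1 (b θ : ℝ) :
    HasDerivAt (d1 b) ((b - 1 / b) * Real.sin (2 * θ)) θ := by
  have h1 : HasDerivAt (fun x => Real.sin x ^ 2) (2 * Real.sin θ * Real.cos θ) θ := by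
    simpa [mul_comm, mul_assoc] using (Real.hasDerivAt_sin θ).fun_pow 2
  have h2 : HasDerivAt (fun x => Real.cos x ^ 2) (2 * Real.cos θ * (-Real.sin θ)) θ := by
    simpa [mul_comm, mul_assoc] using (Real.hasDerivAt_cos θ).fun_pow 2
  have := ((h1.const_mul (-(1 / b))).fun_sub (h2.const_mul b))
  exact this.congr_deriv (by rw [Real.sin_two_mul]; ring)

lemma continuous_d0 (b : ℝ) : Continuous (d0 b) := by
  unfold d0; fun_prop

lemma continuous_d1 (b : ℝ) : Continuous (d1 b) := by
  unfold d1; fun_prop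

lemma integral_eq {b : ℝ} (hb : 1 < b) :
    (∫ θ in (0:ℝ)..(π/2),
        (b - 1/b) * Real.sin (2 * θ) * (1 / d0 b θ + 1 / d1 b θ)) = -4 * Real.log b := by
  have hb0 : (0:ℝ) < b := by linarith
  have hF : ∀ θ ∈ Set.uIcc (0:ℝ) (π/2),
      HasDerivAt (fun x => Real.log (-(d1 b x)) - Real.log (-(d0 b x)))
        ((b - 1/b) * Real.sin (2 * θ) * (1 / d0 b θ + 1 / d1 b θ)) θ := by
    intro θ _
    have h0 := d0_neg hb θ
    have h1 := d1_neg hb θ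
    have hd0 : HasDerivAt (fun x => Real.log (-(d0 b x)))
        ((b - 1 / b) * Real.sin (2 * θ) / (-(d0 b θ))) θ := by
      have := ((hasDerivAt_d0 b θ).fun_neg).log (by linarith)
      convert this using 1
      ring
    have hd1 : HasDerivAt (fun x => Real.log (-(d1 b x)))
        (-((b - 1 / b) * Real.sin (2 * θ)) / (-(d1 b θ))) θ := by
      exact ((hasDerivAt_d1 b θ).fun_neg).log (by linarith)
    have := hd1.fun_sub hd0
    refine this.congr_deriv ?_
    have hn0 : d0 b θ ≠ 0 := ne_of_lt h0
    have hn1 : d1 b θ ≠ 0 := ne_of_lt h1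
    field_simp
    ring
  have hInt : IntervalIntegrable
      (fun θ => (b - 1/b) * Real.sin (2 * θ) * (1 / d0 b θ + 1 / d1 b θ))
      volume 0 (π/2) := by
    apply Continuous.intervalIntegrable
    apply Continuous.mul (by fun_prop)
    apply Continuous.add
    · exact (continuous_const.div (continuous_d0 b) (fun θ => ne_of_lt (d0_neg hb θ)))
    · exact (continuous_const.div (continuous_d1 b) (fun θ => ne_of_lt (d1_neg hb θ)))
  rw [intervalIntegral.integral_eq_sub_of_hasDerivAt hF hInt]
  have e1 : d0 b 0 = -(1/b) := by unfold d0; simp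
  have e2 : d1 b 0 = -b := by unfold d1; simp
  have e3 : d0 b (π/2) = -b := by unfold d0; simp
  have e4 : d1 b (π/2) = -(1/b) := by unfold d1; simp
  rw [e1, e2, e3, e4]
  simp only [neg_neg]
  rw [Real.log_div one_ne_zero (ne_of_gt hb0), Real.log_one]
  ring

/-- With `f_b(θ) = (b-1/b)·sin(2θ)·(1/d₀(θ)+1/d₁(θ))`, one has
`∫₀^{π/2} f_b(θ) dθ → -∞` as `b → +∞`. -/
theorem integral_f_tendsto_atBot :
    Tendsto
      (fun b : ℝ => ∫ θ in (0:ℝ)..(π/2),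
        (b - 1/b) * Real.sin (2 * θ) * (1 / d0 b θ + 1 / d1 b θ))
      atTop atBot := by
  have h : Tendsto (fun b : ℝ => -4 * Real.log b) atTop atBot := by
    have := Real.tendsto_log_atTop
    have h4 : Tendsto (fun b : ℝ => (4:ℝ) * Real.log b) atTop atTop :=
      this.const_mul_atTop (by norm_num)
    have := tendsto_neg_atTop_atBot.comp h4
    simpa [Function.comp_def, neg_mul] using this
  refine h.congr' ?_
  filter_upwards [eventually_gt_atTop (1:ℝ)] with b hb
  exact (integral_eq hb).symm
end
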